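/- arXiv:1101.2538 — 2 statements merged into one kernel-verified Lean document; each statement's English description precedes it below -/
import Mathlib

section
/- Let R = 𝔽₂[c, x, c₂]/I where I is generated by the relations c^{2^s} = 0, x^{2^s} = 0, c·c₂^{2^{s-1}} = ∑_{i=1}^{s-1} c^{2^s - 2^i + 1} c₂^{2^{i-1}} + c², c₂^{2^s} = c² + cx + x², and x·c₂^{2^{s-1}} = ∑_{i=1}^{s-1} x^{2^s - 2^i + 1} c₂^{2^{i-1}} + x² (these are the mod-2 Morava K(s)-relations for Q₈ with v_s set to 1). Then in R, the element c₂ satisfies c₂^{(2^s+1)·2^{s-1}} = 0. -/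
set_option autoImplicit false
set_option maxHeartbeats 1000000

open MvPolynomial

private lemma frob2 {Q : Type*} [CommRing Q] (h2 : (2:Q) = 0) (a b : Q) (n : ℕ) :
    (a + b) ^ (2^n) = a ^ (2^n) + b ^ (2^n) := by
  induction n with
  | zero => simp
  | succ n ih =>
    have h : 2 ^ (n+1) = 2^n * 2 := by ring
    rw [h, pow_mul, pow_mul, pow_mul, ih]
    linear_combination (a^(2^n) * b^(2^n)) * h2

/-- In `R = 𝔽₂[c, x, c₂]/I`, with `I` generated by the mod-2 Morava `K(s)` relations for
`Q₈` (with `v_s = 1`), the class `c₂` satisfies `c₂^{(2^s+1)·2^{s-1}} = 0`. -/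
theorem Q8_c2_nilpotent (s : ℕ) (hs : 1 ≤ s) :
    let c : MvPolynomial (Fin 3) (ZMod 2) := X 0
    let x : MvPolynomial (Fin 3) (ZMod 2) := X 1
    let c₂ : MvPolynomial (Fin 3) (ZMod 2) := X 2
    let I : Ideal (MvPolynomial (Fin 3) (ZMod 2)) := Ideal.span
      {c ^ 2 ^ s, x ^ 2 ^ s,
       c * c₂ ^ 2 ^ (s - 1) -
         (∑ i ∈ Finset.Icc 1 (s - 1), c ^ (2 ^ s - 2 ^ i + 1) * c₂ ^ 2 ^ (i - 1) + c ^ 2),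
       c₂ ^ 2 ^ s - (c ^ 2 + c * x + x ^ 2),
       x * c₂ ^ 2 ^ (s - 1) -
         (∑ i ∈ Finset.Icc 1 (s - 1), x ^ (2 ^ s - 2 ^ i + 1) * c₂ ^ 2 ^ (i - 1) + x ^ 2)}
    (Ideal.Quotient.mk I c₂) ^ ((2 ^ s + 1) * 2 ^ (s - 1)) = 0 := by
  intro c x c₂ I
  have hh1 : 1 ≤ 2 ^ (s-1) := Nat.one_le_two_pow
  have hq2 : 2 ^ s = 2 ^ (s-1) * 2 := by
    rw [← pow_succ]
    congr 1
    omega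
  set C := Ideal.Quotient.mk I c with hCdef
  set Xx := Ideal.Quotient.mk I x with hXdef
  set D := Ideal.Quotient.mk I c₂ with hDdef
  -- characteristic two in the quotient
  have h2Q : (2 : MvPolynomial (Fin 3) (ZMod 2) ⧸ I) = 0 := by
    have h0 : (2 : MvPolynomial (Fin 3) (ZMod 2)) = 0 := by
      have : ((2:ℕ) : MvPolynomial (Fin 3) (ZMod 2)) = 0 := CharP.cast_eq_zero _ 2
      simpa using this
    calc (2 : MvPolynomial (Fin 3) (ZMod 2) ⧸ I)
        = Ideal.Quotient.mk I 2 := (map_ofNat _ 2).symm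
      _ = 0 := by rw [h0, map_zero]
  -- the generators vanish
  have hC : C ^ 2 ^ s = 0 := by
    rw [hCdef, ← map_pow]
    exact Ideal.Quotient.eq_zero_iff_mem.mpr (Ideal.subset_span (by simp))
  have hX : Xx ^ 2 ^ s = 0 := by
    rw [hXdef, ← map_pow]
    exact Ideal.Quotient.eq_zero_iff_mem.mpr (Ideal.subset_span (by simp))
  have hrel_c : C * D ^ 2 ^ (s-1) =
      (∑ i ∈ Finset.Icc 1 (s-1), C ^ (2^s - 2^i + 1) * D ^ 2 ^ (i-1)) + C ^ 2 := by
    have hm : (c * c₂ ^ 2 ^ (s - 1) -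
         (∑ i ∈ Finset.Icc 1 (s - 1), c ^ (2 ^ s - 2 ^ i + 1) * c₂ ^ 2 ^ (i - 1) + c ^ 2)) ∈ I :=
      Ideal.subset_span (by simp)
    have h0 := Ideal.Quotient.eq_zero_iff_mem.mpr hm
    rw [map_sub, sub_eq_zero] at h0
    simpa only [map_mul, map_pow, map_add, map_sum] using h0
  have hrel_q : D ^ 2 ^ s = C ^ 2 + C * Xx + Xx ^ 2 := by
    have hm : (c₂ ^ 2 ^ s - (c ^ 2 + c * x + x ^ 2)) ∈ I := Ideal.subset_span (by simp)
    have h0 := Ideal.Quotient.eq_zero_iff_mem.mpr hm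
    rw [map_sub, sub_eq_zero] at h0
    simpa only [map_mul, map_pow, map_add] using h0
  -- the sum in the c-relation dies after multiplying by C^a for a ≥ 2^(s-1)-1
  have hSc : ∀ a : ℕ, 2 ^ (s-1) - 1 ≤ a →
      C ^ a * (∑ i ∈ Finset.Icc 1 (s-1), C ^ (2^s - 2^i + 1) * D ^ 2 ^ (i-1)) = 0 := by
    intro a ha
    rw [Finset.mul_sum]
    apply Finset.sum_eq_zero
    intro i hi
    have hi2 : 2 ^ i ≤ 2 ^ (s-1) := Nat.pow_le_pow_right (by norm_num) (Finset.mem_Icc.mp hi).2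
    have hi3 : 2 ^ (s-1) ≤ 2 ^ s := Nat.pow_le_pow_right (by norm_num) (by omega)
    have key : C ^ a * C ^ (2^s - 2^i + 1) = 0 := by
      have he : a + (2^s - 2^i + 1) = 2^s + (a + 1 - 2^i) := by omega
      rw [← pow_add, he, pow_add, hC, zero_mul]
    rw [← mul_assoc, key, zero_mul]
  have hpow : C ^ (2^(s-1) - 1) * C = C ^ 2^(s-1) := by
    rw [← pow_succ]
    congr 1
    omega
  -- E1 : C^h * D^h = C^(h+1)
  have E1 : C ^ 2^(s-1) * D ^ 2^(s-1) = C ^ (2^(s-1) + 1) := by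
    calc C ^ 2^(s-1) * D ^ 2^(s-1) = C ^ (2^(s-1)-1) * (C * D ^ 2^(s-1)) := by
          rw [← mul_assoc, hpow]
      _ = C ^ (2^(s-1)-1) * ((∑ i ∈ Finset.Icc 1 (s-1), C ^ (2^s - 2^i + 1) * D ^ 2 ^ (i-1)) + C ^ 2) := by
          rw [hrel_c]
      _ = C ^ (2^(s-1)-1) * (∑ i ∈ Finset.Icc 1 (s-1), C ^ (2^s - 2^i + 1) * D ^ 2 ^ (i-1))
            + C ^ (2^(s-1)-1) * C ^ 2 := by ring
      _ = C ^ (2^(s-1)-1) * C ^ 2 := by rw [hSc _ le_rfl, zero_add]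
      _ = C ^ (2^(s-1) + 1) := by rw [← pow_add]; congr 1; omega
  -- E2 : C^(h+1) * D^h = C^(h+2)
  have E2 : C ^ (2^(s-1) + 1) * D ^ 2^(s-1) = C ^ (2^(s-1) + 2) := by
    calc C ^ (2^(s-1)+1) * D ^ 2^(s-1) = C ^ 2^(s-1) * (C * D ^ 2^(s-1)) := by
          rw [← mul_assoc, ← pow_succ]
      _ = C ^ 2^(s-1) * (∑ i ∈ Finset.Icc 1 (s-1), C ^ (2^s - 2^i + 1) * D ^ 2 ^ (i-1))
            + C ^ 2^(s-1) * C ^ 2 := by rw [hrel_c]; ring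
      _ = C ^ 2^(s-1) * C ^ 2 := by rw [hSc _ (by omega), zero_add]
      _ = C ^ (2^(s-1) + 2) := by rw [← pow_add]
  -- eqA : C^h * D^(2^s) = C^(h+2)
  have eqA : C ^ 2^(s-1) * D ^ 2 ^ s = C ^ (2^(s-1) + 2) := by
    rw [hq2, pow_mul]
    calc C ^ 2^(s-1) * (D ^ 2^(s-1)) ^ 2 = (C ^ 2^(s-1) * D ^ 2^(s-1)) * D ^ 2^(s-1) := by ring
      _ = C ^ (2^(s-1) + 1) * D ^ 2^(s-1) := by rw [E1]
      _ = C ^ (2^(s-1) + 2) := E2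
  -- key identity C^(h+1) * Xx = C^h * Xx^2
  have hkey : C ^ (2^(s-1) + 1) * Xx = C ^ 2^(s-1) * Xx ^ 2 := by
    linear_combination eqA - C ^ 2^(s-1) * hrel_q - C ^ 2^(s-1) * Xx ^ 2 * h2Q
  -- step : C^(h+k) * Xx = C^h * Xx^(k+1)
  have step : ∀ m : ℕ, C ^ (2^(s-1) + m) * Xx = C ^ 2^(s-1) * Xx ^ (m+1) := by
    intro m
    induction m with
    | zero => simp
    | succ m ih =>
      have e1 : C ^ (2^(s-1) + (m+1)) * Xx = C * (C ^ (2^(s-1) + m) * Xx) := by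
        rw [← mul_assoc, ← pow_succ']; ring_nf
      rw [e1, ih]
      calc C * (C ^ 2^(s-1) * Xx ^ (m+1)) = (C ^ (2^(s-1)+1) * Xx) * Xx ^ m := by ring
        _ = (C ^ 2^(s-1) * Xx ^ 2) * Xx ^ m := by rw [hkey]
        _ = C ^ 2^(s-1) * Xx ^ (m+2) := by ring
  have hzero : C ^ 2^(s-1) * Xx ^ (2^(s-1) + 1) = 0 := by
    have h1 := step (2^(s-1))
    have h2 : 2^(s-1) + 2^(s-1) = 2 ^ s := by omega
    rw [h2, hC, zero_mul] at h1
    exact h1.symm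
  -- final multiplication
  have final : C ^ 2^(s-1) * Xx ^ 2^(s-1) * D ^ 2^(s-1) = 0 := by
    have e1 : C ^ 2^(s-1) * Xx ^ 2^(s-1) * D ^ 2^(s-1)
        = Xx ^ 2^(s-1) * (C ^ (2^(s-1)-1) * (C * D ^ 2^(s-1))) := by
      rw [← mul_assoc (C ^ (2^(s-1)-1)), hpow]; ring
    rw [e1, hrel_c, mul_add, hSc _ le_rfl, zero_add]
    have e2 : Xx ^ 2^(s-1) * (C ^ (2^(s-1)-1) * C ^ 2) = (C ^ (2^(s-1)+1) * Xx) * Xx ^ (2^(s-1)-1) := by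
      rw [← pow_add]
      have : 2^(s-1) - 1 + 2 = 2^(s-1) + 1 := by omega
      rw [this]
      have hx1 : Xx ^ (2^(s-1)-1) * Xx = Xx ^ 2^(s-1) := by
        rw [← pow_succ]; congr 1; omega
      rw [← hx1]; ring
    rw [e2, hkey]
    calc (C ^ 2^(s-1) * Xx ^ 2) * Xx ^ (2^(s-1)-1) = C ^ 2^(s-1) * (Xx ^ (2^(s-1)-1) * Xx * Xx) := by ring
      _ = C ^ 2^(s-1) * Xx ^ (2^(s-1)+1) := by
          rw [show Xx ^ (2^(s-1)-1) * Xx = Xx ^ 2^(s-1) from by rw [← pow_succ]; congr 1; omega,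
            ← pow_succ]
      _ = 0 := hzero
  -- assemble
  have hexp : (2 ^ s + 1) * 2 ^ (s-1) = 2 ^ s * 2 ^ (s-1) + 2 ^ (s-1) := by ring
  rw [hexp, pow_add, pow_mul, hrel_q]
  have hfr : (C ^ 2 + C * Xx + Xx ^ 2) ^ 2 ^ (s-1)
      = (C^2) ^ 2^(s-1) + (C*Xx) ^ 2^(s-1) + (Xx^2) ^ 2^(s-1) := by
    rw [frob2 h2Q, frob2 h2Q]
  have hc2 : (C^2 : MvPolynomial (Fin 3) (ZMod 2) ⧸ I) ^ 2^(s-1) = 0 := by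
    rw [← pow_mul, show 2 * 2^(s-1) = 2^s from by omega, hC]
  have hx2 : (Xx^2 : MvPolynomial (Fin 3) (ZMod 2) ⧸ I) ^ 2^(s-1) = 0 := by
    rw [← pow_mul, show 2 * 2^(s-1) = 2^s from by omega, hX]
  rw [hfr, hc2, hx2, zero_add, add_zero, mul_pow]
  exact final
end

section
/- In the ring B = 𝔽₂[c, x, c₂]/I, with I generated by the Q₈ Morava K(s) relations (v_s = 1): c^{2^s} = x^{2^s} = 0, c·c₂^{2^{s-1}} = ∑_{i=1}^{s-1} c^{2^s-2^i+1} c₂^{2^{i-1}} + c², c₂^{2^s} = c² + cx + x², x·c₂^{2^{s-1}} = ∑_{i=1}^{s-1} x^{2^s-2^i+1} c₂^{2^{i-1}} + x², the ring automorphism σ determined by σ(c) = x, σ(x) = c + x + c^{2^{s-1}} x^{2^{s-1}}, σ(c₂) = c₂ is well-defined and satisfies σ³ = id. -/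
set_option autoImplicit false
set_option maxHeartbeats 1000000

section Q8Aux
variable {R : Type*} [CommRing R]

lemma q8_frob2 (h2 : ∀ a : R, a + a = 0) (a b : R) : (a + b) ^ 2 = a ^ 2 + b ^ 2 := by
  linear_combination h2 (a * b)

lemma q8_frobpow (h2 : ∀ a : R, a + a = 0) (a b : R) (k : ℕ) :
    (a + b) ^ 2 ^ k = a ^ 2 ^ k + b ^ 2 ^ k := by
  induction k with
  | zero => simp
  | succ n ih => rw [pow_succ, pow_mul, pow_mul, pow_mul, ih, q8_frob2 h2]

variable (t : ℕ) (C X D : R)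

/-- kill high powers -/
lemma q8_L0 (hC : C ^ 2 ^ (t+1) = 0) {m : ℕ} (hm : 2 ^ (t+1) ≤ m) : C ^ m = 0 := by
  have h : m = 2 ^ (t+1) + (m - 2 ^ (t+1)) := by omega
  rw [h, pow_add, hC, zero_mul]

lemma q8_L1 (hC : C ^ 2 ^ (t+1) = 0) {m : ℕ} (hm : 2 ^ t ≤ m + 1) :
    C ^ m * (∑ i ∈ Finset.Icc 1 t, C ^ (2 ^ (t+1) - 2 ^ i + 1) * D ^ 2 ^ (i-1)) = 0 := by
  rw [Finset.mul_sum]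
  apply Finset.sum_eq_zero
  intro i hi
  simp only [Finset.mem_Icc] at hi
  have h1 : 2 ^ i ≤ 2 ^ t := Nat.pow_le_pow_right (by norm_num) hi.2
  have h2 : 2 ^ (t+1) = 2 ^ t * 2 := by rw [pow_succ]
  rw [← mul_assoc, ← pow_add, q8_L0 t C hC (by omega), zero_mul]

lemma q8_L2 (hC : C ^ 2 ^ (t+1) = 0)
    (hCD : C * D ^ 2 ^ t = (∑ i ∈ Finset.Icc 1 t, C ^ (2 ^ (t+1) - 2 ^ i + 1) * D ^ 2 ^ (i-1)) + C ^ 2)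
    {m : ℕ} (hm : 2 ^ t ≤ m) : C ^ m * D ^ 2 ^ t = C ^ (m + 1) := by
  have h1 : 1 ≤ 2 ^ t := Nat.one_le_two_pow
  obtain ⟨m', rfl⟩ : ∃ m', m = m' + 1 := ⟨m - 1, by omega⟩
  calc C ^ (m'+1) * D ^ 2 ^ t = C ^ m' * (C * D ^ 2 ^ t) := by ring
    _ = C ^ m' * (∑ i ∈ Finset.Icc 1 t, C ^ (2 ^ (t+1) - 2 ^ i + 1) * D ^ 2 ^ (i-1)) + C ^ m' * C ^ 2 := by
        rw [hCD]; ring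
    _ = C ^ (m' + 1 + 1) := by rw [q8_L1 t C D hC (by omega)]; ring

lemma q8_L3 (hC : C ^ 2 ^ (t+1) = 0)
    (hCD : C * D ^ 2 ^ t = (∑ i ∈ Finset.Icc 1 t, C ^ (2 ^ (t+1) - 2 ^ i + 1) * D ^ 2 ^ (i-1)) + C ^ 2) :
    (∑ i ∈ Finset.Icc 1 t, C ^ (2 ^ (t+1) - 2 ^ i + 1) * D ^ 2 ^ (i-1)) * D ^ 2 ^ t
      = C * (∑ i ∈ Finset.Icc 1 t, C ^ (2 ^ (t+1) - 2 ^ i + 1) * D ^ 2 ^ (i-1)) := by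
  rw [Finset.sum_mul, Finset.mul_sum]
  apply Finset.sum_congr rfl
  intro i hi
  simp only [Finset.mem_Icc] at hi
  have h1 : 2 ^ i ≤ 2 ^ t := Nat.pow_le_pow_right (by norm_num) hi.2
  have h2 : 2 ^ (t+1) = 2 ^ t * 2 := by rw [pow_succ]
  have h3 : 2 ^ t ≤ 2 ^ (t+1) - 2 ^ i + 1 := by omega
  calc C ^ (2 ^ (t+1) - 2 ^ i + 1) * D ^ 2 ^ (i-1) * D ^ 2 ^ t
      = (C ^ (2 ^ (t+1) - 2 ^ i + 1) * D ^ 2 ^ t) * D ^ 2 ^ (i-1) := by ring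
    _ = C ^ (2 ^ (t+1) - 2 ^ i + 1 + 1) * D ^ 2 ^ (i-1) := by rw [q8_L2 t C D hC hCD h3]
    _ = C * (C ^ (2 ^ (t+1) - 2 ^ i + 1) * D ^ 2 ^ (i-1)) := by ring

/-- the key relation: `C·X² = C²·X` in the quotient. -/
lemma q8_key (h2 : ∀ a : R, a + a = 0) (hC : C ^ 2 ^ (t+1) = 0)
    (hCD : C * D ^ 2 ^ t = (∑ i ∈ Finset.Icc 1 t, C ^ (2 ^ (t+1) - 2 ^ i + 1) * D ^ 2 ^ (i-1)) + C ^ 2)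
    (hD : D ^ 2 ^ (t+1) = C ^ 2 + C * X + X ^ 2) :
    C * X ^ 2 = C ^ 2 * X := by
  have hQrw : D ^ 2 ^ (t+1) = D ^ 2 ^ t * D ^ 2 ^ t := by
    rw [← pow_add]; congr 1; rw [pow_succ]; omega
  have hL3 := q8_L3 t C D hC hCD
  have e2 : C * D ^ 2 ^ (t+1) = C ^ 3 := by
    linear_combination C * hQrw + (D ^ 2 ^ t + C) * hCD + hL3
      + h2 (C * (∑ i ∈ Finset.Icc 1 t, C ^ (2 ^ (t+1) - 2 ^ i + 1) * D ^ 2 ^ (i-1)))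
  have e1 : C * D ^ 2 ^ (t+1) = C ^ 3 + C ^ 2 * X + C * X ^ 2 := by rw [hD]; ring
  linear_combination e2 - e1 - h2 (C ^ 2 * X)


/-- slide lemma: `C^(a+1) X^(b+1) = C^(a+b+1) X`. -/
lemma q8_slide (h2 : ∀ a : R, a + a = 0) (hC : C ^ 2 ^ (t+1) = 0)
    (hCD : C * D ^ 2 ^ t = (∑ i ∈ Finset.Icc 1 t, C ^ (2 ^ (t+1) - 2 ^ i + 1) * D ^ 2 ^ (i-1)) + C ^ 2)
    (hD : D ^ 2 ^ (t+1) = C ^ 2 + C * X + X ^ 2) :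
    ∀ b a : ℕ, C ^ (a+1) * X ^ (b+1) = C ^ (a+b+1) * X := by
  have key := q8_key t C X D h2 hC hCD hD
  intro b
  induction b with
  | zero => intro a; rw [pow_one]
  | succ b ih =>
    intro a
    have e1 : C ^ (a+1) * X ^ (b+1+1) = C ^ (a+1+1) * X ^ (b+1) := by
      linear_combination (C ^ a * X ^ b) * key
    have e2 := ih (a+1)
    have e3 : a+1+b+1 = a+(b+1)+1 := by omega
    rw [e1, e2, e3]

lemma q8_zero (h2 : ∀ a : R, a + a = 0) (hC : C ^ 2 ^ (t+1) = 0) (hX : X ^ 2 ^ (t+1) = 0)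
    (hCD : C * D ^ 2 ^ t = (∑ i ∈ Finset.Icc 1 t, C ^ (2 ^ (t+1) - 2 ^ i + 1) * D ^ 2 ^ (i-1)) + C ^ 2)
    (hD : D ^ 2 ^ (t+1) = C ^ 2 + C * X + X ^ 2)
    {a b : ℕ} (hab : 2 ^ (t+1) + 1 ≤ a + b) : C ^ a * X ^ b = 0 := by
  rcases Nat.eq_zero_or_pos a with rfl | ha
  · rw [pow_zero, one_mul]; exact q8_L0 t X hX (by omega)
  rcases Nat.eq_zero_or_pos b with rfl | hb
  · rw [pow_zero, mul_one]; exact q8_L0 t C hC (by omega)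
  obtain ⟨a', rfl⟩ : ∃ a', a = a'+1 := ⟨a-1, by omega⟩
  obtain ⟨b', rfl⟩ : ∃ b', b = b'+1 := ⟨b-1, by omega⟩
  rw [q8_slide t C X D h2 hC hCD hD b' a', q8_L0 t C hC (by omega), zero_mul]

lemma q8_W (h2 : ∀ a : R, a + a = 0) (hC : C ^ 2 ^ (t+1) = 0)
    (hCD : C * D ^ 2 ^ t = (∑ i ∈ Finset.Icc 1 t, C ^ (2 ^ (t+1) - 2 ^ i + 1) * D ^ 2 ^ (i-1)) + C ^ 2)
    (hD : D ^ 2 ^ (t+1) = C ^ 2 + C * X + X ^ 2) :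
    ∀ m : ℕ, 2 ≤ m → (C + X) ^ m = C ^ m + X ^ m := by
  intro m
  induction m with
  | zero => omega
  | succ m ih =>
    intro hm
    rcases Nat.lt_or_ge m 2 with hm2 | hm2
    · have : m = 1 := by omega
      subst this
      exact q8_frob2 h2 C X
    · have e := ih hm2
      obtain ⟨m', rfl⟩ : ∃ m', m = m'+1 := ⟨m-1, by omega⟩
      have hCXm : C ^ (0+m'+1) * X = C ^ (0+1) * X ^ (m'+1) :=
        (q8_slide t C X D h2 hC hCD hD m' 0).symm
      simp only [zero_add] at hCXm
      linear_combination (C+X) * e - hCXm + h2 (C ^ (m'+1) * X)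

lemma q8_Ypow (h2 : ∀ a : R, a + a = 0) (k : ℕ) :
    (C + X + C ^ 2 ^ t * X ^ 2 ^ t) ^ 2 ^ k
      = C ^ 2 ^ k + X ^ 2 ^ k + C ^ (2 ^ t * 2 ^ k) * X ^ (2 ^ t * 2 ^ k) := by
  have h := q8_frobpow h2 (C + X) (C ^ 2 ^ t * X ^ 2 ^ t) k
  rw [q8_frobpow h2 C X k, mul_pow, ← pow_mul, ← pow_mul] at h
  exact h

lemma q8_Y2 (h2 : ∀ a : R, a + a = 0) (hC : C ^ 2 ^ (t+1) = 0) :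
    (C + X + C ^ 2 ^ t * X ^ 2 ^ t) ^ 2 = C ^ 2 + X ^ 2 := by
  calc (C + X + C ^ 2 ^ t * X ^ 2 ^ t) ^ 2
      = (C + X) ^ 2 + (C ^ 2 ^ t * X ^ 2 ^ t) ^ 2 := q8_frob2 h2 _ _
    _ = C ^ 2 + X ^ 2 + C ^ (2 ^ t * 2) * X ^ (2 ^ t * 2) := by
        rw [q8_frob2 h2, mul_pow, ← pow_mul, ← pow_mul]
    _ = C ^ 2 + X ^ 2 := by
        rw [q8_L0 t C hC (pow_succ 2 t).le, zero_mul, add_zero]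

lemma q8_YQ (h2 : ∀ a : R, a + a = 0) (hC : C ^ 2 ^ (t+1) = 0) (hX : X ^ 2 ^ (t+1) = 0) :
    (C + X + C ^ 2 ^ t * X ^ 2 ^ t) ^ 2 ^ (t+1) = 0 := by
  have h := q8_Ypow t C X h2 (t+1)
  have h1 : (1:ℕ) ≤ 2 ^ t := Nat.one_le_two_pow
  have h2' : (1:ℕ) ≤ 2 ^ (t+1) := Nat.one_le_two_pow
  rw [hC, hX, q8_L0 t C hC (Nat.le_mul_of_pos_left _ (by omega)), zero_mul] at h
  simpa using h

lemma q8_Yodd (h2 : ∀ a : R, a + a = 0) (hC : C ^ 2 ^ (t+1) = 0) (hX : X ^ 2 ^ (t+1) = 0)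
    (hCD : C * D ^ 2 ^ t = (∑ i ∈ Finset.Icc 1 t, C ^ (2 ^ (t+1) - 2 ^ i + 1) * D ^ 2 ^ (i-1)) + C ^ 2)
    (hD : D ^ 2 ^ (t+1) = C ^ 2 + C * X + X ^ 2) :
    ∀ n : ℕ, 1 ≤ n → (C + X + C ^ 2 ^ t * X ^ 2 ^ t) ^ (2*n+1) = C ^ (2*n+1) + X ^ (2*n+1) := by
  intro n hn
  obtain ⟨n', rfl⟩ : ∃ n', n = n'+1 := ⟨n-1, by omega⟩
  have hpow : (2:ℕ) ^ (t+1) = 2 ^ t * 2 := pow_succ 2 t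
  have hCXW : C ^ 2 ^ t * X ^ 2 ^ t * (C + X) = 0 := by
    have z1 : C ^ (2 ^ t + 1) * X ^ 2 ^ t = 0 :=
      q8_zero t C X D h2 hC hX hCD hD (by omega)
    have z2 : C ^ 2 ^ t * X ^ (2 ^ t + 1) = 0 :=
      q8_zero t C X D h2 hC hX hCD hD (by omega)
    linear_combination z1 + z2
  have hW := q8_W t C X D h2 hC hCD hD (2*(n'+1)+1) (by omega)
  have hY2 := q8_Y2 t C X h2 hC
  calc (C + X + C ^ 2 ^ t * X ^ 2 ^ t) ^ (2*(n'+1)+1)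
      = (C + X + C ^ 2 ^ t * X ^ 2 ^ t) * (((C + X + C ^ 2 ^ t * X ^ 2 ^ t) ^ 2) ^ (n'+1)) := by
        rw [← pow_mul, ← pow_succ']
    _ = (C + X + C ^ 2 ^ t * X ^ 2 ^ t) * (((C + X) ^ 2) ^ (n'+1)) := by
        rw [hY2, ← q8_frob2 h2 C X]
    _ = (C + X) ^ (2*(n'+1)+1) + (C ^ 2 ^ t * X ^ 2 ^ t * (C + X)) * (C + X) ^ (2*n'+1) := by
        rw [← pow_mul]; ring
    _ = C ^ (2*(n'+1)+1) + X ^ (2*(n'+1)+1) := by rw [hCXW, zero_mul, add_zero, hW]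

lemma q8_G4 (h2 : ∀ a : R, a + a = 0) (hC : C ^ 2 ^ (t+1) = 0) (hX : X ^ 2 ^ (t+1) = 0)
    (hCD : C * D ^ 2 ^ t = (∑ i ∈ Finset.Icc 1 t, C ^ (2 ^ (t+1) - 2 ^ i + 1) * D ^ 2 ^ (i-1)) + C ^ 2)
    (hD : D ^ 2 ^ (t+1) = C ^ 2 + C * X + X ^ 2) :
    X ^ 2 + X * (C + X + C ^ 2 ^ t * X ^ 2 ^ t) + (C + X + C ^ 2 ^ t * X ^ 2 ^ t) ^ 2
      = C ^ 2 + C * X + X ^ 2 := by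
  have hY2 := q8_Y2 t C X h2 hC
  have hpow : (2:ℕ) ^ (t+1) = 2 ^ t * 2 := pow_succ 2 t
  have z : C ^ 2 ^ t * X ^ (2 ^ t + 1) = 0 :=
    q8_zero t C X D h2 hC hX hCD hD (by omega)
  linear_combination hY2 + z + h2 (X ^ 2)

lemma q8_G5 (h2 : ∀ a : R, a + a = 0) (hC : C ^ 2 ^ (t+1) = 0) (hX : X ^ 2 ^ (t+1) = 0)
    (hCD : C * D ^ 2 ^ t = (∑ i ∈ Finset.Icc 1 t, C ^ (2 ^ (t+1) - 2 ^ i + 1) * D ^ 2 ^ (i-1)) + C ^ 2)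
    (hXD : X * D ^ 2 ^ t = (∑ i ∈ Finset.Icc 1 t, X ^ (2 ^ (t+1) - 2 ^ i + 1) * D ^ 2 ^ (i-1)) + X ^ 2)
    (hD : D ^ 2 ^ (t+1) = C ^ 2 + C * X + X ^ 2) :
    (C + X + C ^ 2 ^ t * X ^ 2 ^ t) * D ^ 2 ^ t
      = (∑ i ∈ Finset.Icc 1 t,
          (C + X + C ^ 2 ^ t * X ^ 2 ^ t) ^ (2 ^ (t+1) - 2 ^ i + 1) * D ^ 2 ^ (i-1))
        + (C + X + C ^ 2 ^ t * X ^ 2 ^ t) ^ 2 := by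
  have hpow : (2:ℕ) ^ (t+1) = 2 ^ t * 2 := pow_succ 2 t
  have hsum : (∑ i ∈ Finset.Icc 1 t,
        (C + X + C ^ 2 ^ t * X ^ 2 ^ t) ^ (2 ^ (t+1) - 2 ^ i + 1) * D ^ 2 ^ (i-1))
      = (∑ i ∈ Finset.Icc 1 t, C ^ (2 ^ (t+1) - 2 ^ i + 1) * D ^ 2 ^ (i-1))
        + (∑ i ∈ Finset.Icc 1 t, X ^ (2 ^ (t+1) - 2 ^ i + 1) * D ^ 2 ^ (i-1)) := by
    rw [← Finset.sum_add_distrib]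
    apply Finset.sum_congr rfl
    intro i hi
    simp only [Finset.mem_Icc] at hi
    have h1 : 2 ^ i ≤ 2 ^ t := Nat.pow_le_pow_right (by norm_num) hi.2
    have h1' : (2:ℕ) ^ (i-1) < 2 ^ t := Nat.pow_lt_pow_right (by norm_num) (by omega)
    have e1 : (2:ℕ) ^ i = 2 * 2 ^ (i-1) := by
      conv_lhs => rw [show i = (i-1)+1 by omega]
      rw [pow_succ]; ring
    have hexp : 2 ^ (t+1) - 2 ^ i + 1 = 2*(2 ^ t - 2 ^ (i-1)) + 1 := by omega
    rw [hexp, q8_Yodd t C X D h2 hC hX hCD hD (2 ^ t - 2 ^ (i-1)) (by omega), add_mul]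
  have hM : C ^ 2 ^ t * X ^ 2 ^ t * D ^ 2 ^ t = 0 := by
    have e := q8_L2 t C D hC hCD (le_refl (2 ^ t))
    have z : C ^ (2 ^ t + 1) * X ^ 2 ^ t = 0 :=
      q8_zero t C X D h2 hC hX hCD hD (by omega)
    linear_combination X ^ 2 ^ t * e + z
  have hY2 := q8_Y2 t C X h2 hC
  linear_combination hCD + hXD + hM - hsum - hY2

lemma q8_F5 (h2 : ∀ a : R, a + a = 0) (hC : C ^ 2 ^ (t+1) = 0) (hX : X ^ 2 ^ (t+1) = 0)
    (hCD : C * D ^ 2 ^ t = (∑ i ∈ Finset.Icc 1 t, C ^ (2 ^ (t+1) - 2 ^ i + 1) * D ^ 2 ^ (i-1)) + C ^ 2)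
    (hD : D ^ 2 ^ (t+1) = C ^ 2 + C * X + X ^ 2) :
    X + (C + X + C ^ 2 ^ t * X ^ 2 ^ t)
      + X ^ 2 ^ t * (C + X + C ^ 2 ^ t * X ^ 2 ^ t) ^ 2 ^ t = C := by
  have hYq := q8_Ypow t C X h2 t
  have hpow : (2:ℕ) ^ (t+1) = 2 ^ t * 2 := pow_succ 2 t
  have h1 : (1:ℕ) ≤ 2 ^ t := Nat.one_le_two_pow
  have hqq : 2 ^ t ≤ 2 ^ t * 2 ^ t := Nat.le_mul_of_pos_left _ (by omega)
  have z1 : X ^ 2 ^ t * X ^ 2 ^ t = 0 := by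
    rw [← pow_add]; exact q8_L0 t X hX (by omega)
  have z2 : C ^ (2 ^ t * 2 ^ t) * X ^ (2 ^ t * 2 ^ t + 2 ^ t) = 0 :=
    q8_zero t C X D h2 hC hX hCD hD (by omega)
  linear_combination X ^ 2 ^ t * hYq + z1 + z2 + h2 X + h2 (C ^ 2 ^ t * X ^ 2 ^ t)

lemma q8_F6 (h2 : ∀ a : R, a + a = 0) (hC : C ^ 2 ^ (t+1) = 0) (hX : X ^ 2 ^ (t+1) = 0)
    (hCD : C * D ^ 2 ^ t = (∑ i ∈ Finset.Icc 1 t, C ^ (2 ^ (t+1) - 2 ^ i + 1) * D ^ 2 ^ (i-1)) + C ^ 2)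
    (hD : D ^ 2 ^ (t+1) = C ^ 2 + C * X + X ^ 2) :
    C + (C + X + C ^ 2 ^ t * X ^ 2 ^ t)
      + C ^ 2 ^ t * (C + X + C ^ 2 ^ t * X ^ 2 ^ t) ^ 2 ^ t = X := by
  have hYq := q8_Ypow t C X h2 t
  have hpow : (2:ℕ) ^ (t+1) = 2 ^ t * 2 := pow_succ 2 t
  have h1 : (1:ℕ) ≤ 2 ^ t := Nat.one_le_two_pow
  have hqq : 2 ^ t ≤ 2 ^ t * 2 ^ t := Nat.le_mul_of_pos_left _ (by omega)
  have z1 : C ^ 2 ^ t * C ^ 2 ^ t = 0 := by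
    rw [← pow_add]; exact q8_L0 t C hC (by omega)
  have z2 : C ^ (2 ^ t * 2 ^ t + 2 ^ t) * X ^ (2 ^ t * 2 ^ t) = 0 :=
    q8_zero t C X D h2 hC hX hCD hD (by omega)
  linear_combination C ^ 2 ^ t * hYq + z1 + z2 + h2 C + h2 (C ^ 2 ^ t * X ^ 2 ^ t)

end Q8Aux

open MvPolynomial

/-- The assignment `σ(c) = x`, `σ(x) = c + x + c^{2^{s-1}} x^{2^{s-1}}`, `σ(c₂) = c₂`
preserves the ideal `I` of the `Q₈` Morava `K(s)` relations (with `v_s = 1`), hence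
descends to a ring automorphism `σ` of `B = 𝔽₂[c, x, c₂]/I`, and `σ³ = id` on `B`. -/
theorem Q8_sigma_automorphism (s : ℕ) (hs : 1 ≤ s) :
    let c : MvPolynomial (Fin 3) (ZMod 2) := X 0
    let x : MvPolynomial (Fin 3) (ZMod 2) := X 1
    let c₂ : MvPolynomial (Fin 3) (ZMod 2) := X 2
    let I : Ideal (MvPolynomial (Fin 3) (ZMod 2)) := Ideal.span
      {c ^ 2 ^ s, x ^ 2 ^ s,
       c * c₂ ^ 2 ^ (s - 1) -
         (∑ i ∈ Finset.Icc 1 (s - 1), c ^ (2 ^ s - 2 ^ i + 1) * c₂ ^ 2 ^ (i - 1) + c ^ 2),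
       c₂ ^ 2 ^ s - (c ^ 2 + c * x + x ^ 2),
       x * c₂ ^ 2 ^ (s - 1) -
         (∑ i ∈ Finset.Icc 1 (s - 1), x ^ (2 ^ s - 2 ^ i + 1) * c₂ ^ 2 ^ (i - 1) + x ^ 2)}
    let σ₀ : MvPolynomial (Fin 3) (ZMod 2) →ₐ[ZMod 2] MvPolynomial (Fin 3) (ZMod 2) :=
      aeval ![x, c + x + c ^ 2 ^ (s - 1) * x ^ 2 ^ (s - 1), c₂]
    (∀ p ∈ I, σ₀ p ∈ I) ∧ (∀ p, σ₀ (σ₀ (σ₀ p)) - p ∈ I) := by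
  intro c x c₂ I σ₀
  obtain ⟨t, rfl⟩ : ∃ t, s = t + 1 := ⟨s - 1, by omega⟩
  have hc : c = X 0 := rfl
  have hx : x = X 1 := rfl
  have hc₂ : c₂ = X 2 := rfl
  have hI : I = Ideal.span
      {c ^ 2 ^ (t+1), x ^ 2 ^ (t+1),
       c * c₂ ^ 2 ^ t -
         (∑ i ∈ Finset.Icc 1 t, c ^ (2 ^ (t+1) - 2 ^ i + 1) * c₂ ^ 2 ^ (i - 1) + c ^ 2),
       c₂ ^ 2 ^ (t+1) - (c ^ 2 + c * x + x ^ 2),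
       x * c₂ ^ 2 ^ t -
         (∑ i ∈ Finset.Icc 1 t, x ^ (2 ^ (t+1) - 2 ^ i + 1) * c₂ ^ 2 ^ (i - 1) + x ^ 2)} := rfl
  have hσ : σ₀ = aeval ![x, c + x + c ^ 2 ^ t * x ^ 2 ^ t, c₂] := rfl
  -- values of σ₀ on generators
  have hσ0 : σ₀ c = x := by
    rw [hσ, hc]; simp
  have hσ1 : σ₀ x = c + x + c ^ 2 ^ t * x ^ 2 ^ t := by
    rw [hσ, hx]; simp
  have hσ2 : σ₀ c₂ = c₂ := by
    rw [hσ, hc₂]; simp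
  -- membership of the five generators
  have m1 : c ^ 2 ^ (t+1) ∈ I := by
    rw [hI]; exact Ideal.subset_span (Set.mem_insert _ _)
  have m2 : x ^ 2 ^ (t+1) ∈ I := by
    rw [hI]; exact Ideal.subset_span (Set.mem_insert_of_mem _ (Set.mem_insert _ _))
  have m3 : c * c₂ ^ 2 ^ t -
      (∑ i ∈ Finset.Icc 1 t, c ^ (2 ^ (t+1) - 2 ^ i + 1) * c₂ ^ 2 ^ (i - 1) + c ^ 2) ∈ I := by
    rw [hI]
    exact Ideal.subset_span (Set.mem_insert_of_mem _ (Set.mem_insert_of_mem _ (Set.mem_insert _ _)))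
  have m4 : c₂ ^ 2 ^ (t+1) - (c ^ 2 + c * x + x ^ 2) ∈ I := by
    rw [hI]
    exact Ideal.subset_span (Set.mem_insert_of_mem _ (Set.mem_insert_of_mem _
      (Set.mem_insert_of_mem _ (Set.mem_insert _ _))))
  have m5 : x * c₂ ^ 2 ^ t -
      (∑ i ∈ Finset.Icc 1 t, x ^ (2 ^ (t+1) - 2 ^ i + 1) * c₂ ^ 2 ^ (i - 1) + x ^ 2) ∈ I := by
    rw [hI]
    exact Ideal.subset_span (Set.mem_insert_of_mem _ (Set.mem_insert_of_mem _
      (Set.mem_insert_of_mem _ (Set.mem_insert_of_mem _ (Set.mem_singleton _)))))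
  -- quotient ring facts
  have h2 : ∀ a : MvPolynomial (Fin 3) (ZMod 2) ⧸ I, a + a = 0 := by
    intro a
    have h11 : (1 + 1 : MvPolynomial (Fin 3) (ZMod 2)) = 0 := by
      have h0 : (1 + 1 : ZMod 2) = 0 := by decide
      calc (1 + 1 : MvPolynomial (Fin 3) (ZMod 2)) = C (1+1 : ZMod 2) := by
            rw [map_add, C_1]
        _ = 0 := by rw [h0, C_0]
    have hq : (1 + 1 : MvPolynomial (Fin 3) (ZMod 2) ⧸ I) = 0 := by
      have h12 := congrArg (Ideal.Quotient.mk I) h11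
      rw [map_add, map_one, map_zero] at h12
      exact h12
    linear_combination hq * a
  have hC : (Ideal.Quotient.mk I c) ^ 2 ^ (t+1) = 0 := by
    rw [← map_pow]; exact Ideal.Quotient.eq_zero_iff_mem.mpr m1
  have hX : (Ideal.Quotient.mk I x) ^ 2 ^ (t+1) = 0 := by
    rw [← map_pow]; exact Ideal.Quotient.eq_zero_iff_mem.mpr m2
  have hCD : (Ideal.Quotient.mk I c) * (Ideal.Quotient.mk I c₂) ^ 2 ^ t
      = (∑ i ∈ Finset.Icc 1 t, (Ideal.Quotient.mk I c) ^ (2 ^ (t+1) - 2 ^ i + 1)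
          * (Ideal.Quotient.mk I c₂) ^ 2 ^ (i-1)) + (Ideal.Quotient.mk I c) ^ 2 := by
    have e3 := Ideal.Quotient.eq_zero_iff_mem.mpr m3
    rw [map_sub, sub_eq_zero] at e3
    simpa only [map_add, map_mul, map_pow, map_sum] using e3
  have hXD : (Ideal.Quotient.mk I x) * (Ideal.Quotient.mk I c₂) ^ 2 ^ t
      = (∑ i ∈ Finset.Icc 1 t, (Ideal.Quotient.mk I x) ^ (2 ^ (t+1) - 2 ^ i + 1)
          * (Ideal.Quotient.mk I c₂) ^ 2 ^ (i-1)) + (Ideal.Quotient.mk I x) ^ 2 := by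
    have e5 := Ideal.Quotient.eq_zero_iff_mem.mpr m5
    rw [map_sub, sub_eq_zero] at e5
    simpa only [map_add, map_mul, map_pow, map_sum] using e5
  have hD : (Ideal.Quotient.mk I c₂) ^ 2 ^ (t+1)
      = (Ideal.Quotient.mk I c) ^ 2 + (Ideal.Quotient.mk I c) * (Ideal.Quotient.mk I x)
        + (Ideal.Quotient.mk I x) ^ 2 := by
    have e4 := Ideal.Quotient.eq_zero_iff_mem.mpr m4
    rw [map_sub, sub_eq_zero] at e4
    simpa only [map_add, map_mul, map_pow] using e4
  constructor
  · -- σ₀ preserves I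
    have hle : I ≤ Ideal.comap σ₀.toRingHom I := by
      rw [hI, Ideal.span_le]
      rintro g (rfl | rfl | rfl | rfl | hg)
      · -- c^Q ↦ x^Q
        refine Ideal.mem_comap.mpr ?_
        show σ₀ _ ∈ I
        rw [map_pow, hσ0]
        exact m2
      · -- x^Q ↦ y^Q
        refine Ideal.mem_comap.mpr ?_
        show σ₀ _ ∈ I
        refine Ideal.Quotient.eq_zero_iff_mem.mp ?_
        rw [map_pow, hσ1]
        simp only [map_pow, map_add, map_mul]
        exact q8_YQ t _ _ h2 hC hX
      · -- f_c ↦ f_x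
        refine Ideal.mem_comap.mpr ?_
        show σ₀ _ ∈ I
        have : σ₀ (c * c₂ ^ 2 ^ t -
            (∑ i ∈ Finset.Icc 1 t, c ^ (2 ^ (t+1) - 2 ^ i + 1) * c₂ ^ 2 ^ (i - 1) + c ^ 2))
            = x * c₂ ^ 2 ^ t -
            (∑ i ∈ Finset.Icc 1 t, x ^ (2 ^ (t+1) - 2 ^ i + 1) * c₂ ^ 2 ^ (i - 1) + x ^ 2) := by
          simp only [map_sub, map_add, map_mul, map_pow, map_sum, hσ0, hσ2]
        rw [this]
        exact m5
      · -- g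
        refine Ideal.mem_comap.mpr ?_
        show σ₀ _ ∈ I
        refine Ideal.Quotient.eq_zero_iff_mem.mp ?_
        rw [map_sub, map_sub, sub_eq_zero]
        simp only [map_add, map_mul, map_pow, hσ0, hσ1, hσ2]
        calc (Ideal.Quotient.mk I c₂) ^ 2 ^ (t+1)
            = (Ideal.Quotient.mk I c) ^ 2 + (Ideal.Quotient.mk I c) * (Ideal.Quotient.mk I x)
              + (Ideal.Quotient.mk I x) ^ 2 := hD
          _ = _ := (q8_G4 t _ _ (Ideal.Quotient.mk I c₂) h2 hC hX hCD hD).symm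
      · -- f_x ↦ σ(f_x)
        rw [Set.mem_singleton_iff] at hg
        subst hg
        refine Ideal.mem_comap.mpr ?_
        show σ₀ _ ∈ I
        refine Ideal.Quotient.eq_zero_iff_mem.mp ?_
        rw [map_sub, map_sub, sub_eq_zero]
        simp only [map_add, map_mul, map_pow, map_sum, hσ0, hσ1, hσ2]
        exact q8_G5 t _ _ _ h2 hC hX hCD hXD hD
    exact fun p hp => Ideal.mem_comap.mp (hle hp)
  · -- σ₀ ∘ σ₀ ∘ σ₀ = id mod I
    intro p
    have hσy : σ₀ (c + x + c ^ 2 ^ t * x ^ 2 ^ t)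
        = x + (c + x + c ^ 2 ^ t * x ^ 2 ^ t)
          + x ^ 2 ^ t * (c + x + c ^ 2 ^ t * x ^ 2 ^ t) ^ 2 ^ t := by
      simp only [map_add, map_mul, map_pow, hσ0, hσ1]
    have hkey : (Ideal.Quotient.mk I).comp
        ((σ₀.toRingHom).comp ((σ₀.toRingHom).comp σ₀.toRingHom)) = Ideal.Quotient.mk I := by
      apply MvPolynomial.ringHom_ext
      · intro r
        have hσC : ∀ r : ZMod 2, σ₀ (C r) = C r := by
          intro r; rw [hσ, aeval_C, algebraMap_eq]
        simp only [RingHom.comp_apply, AlgHom.toRingHom_eq_coe, RingHom.coe_coe, hσC]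
      · intro i
        fin_cases i
        · -- X 0
          simp only [RingHom.comp_apply, AlgHom.toRingHom_eq_coe, RingHom.coe_coe]
          show (Ideal.Quotient.mk I) (σ₀ (σ₀ (σ₀ c))) = (Ideal.Quotient.mk I) c
          rw [hσ0, hσ1, hσy]
          simp only [map_add, map_mul, map_pow]
          exact q8_F5 t _ _ (Ideal.Quotient.mk I c₂) h2 hC hX hCD hD
        · -- X 1
          simp only [RingHom.comp_apply, AlgHom.toRingHom_eq_coe, RingHom.coe_coe]
          show (Ideal.Quotient.mk I) (σ₀ (σ₀ (σ₀ x))) = (Ideal.Quotient.mk I) x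
          rw [hσ1, hσy]
          have hσz : σ₀ (x + (c + x + c ^ 2 ^ t * x ^ 2 ^ t)
              + x ^ 2 ^ t * (c + x + c ^ 2 ^ t * x ^ 2 ^ t) ^ 2 ^ t)
              = (c + x + c ^ 2 ^ t * x ^ 2 ^ t)
                + (x + (c + x + c ^ 2 ^ t * x ^ 2 ^ t)
                  + x ^ 2 ^ t * (c + x + c ^ 2 ^ t * x ^ 2 ^ t) ^ 2 ^ t)
                + (c + x + c ^ 2 ^ t * x ^ 2 ^ t) ^ 2 ^ t
                  * (x + (c + x + c ^ 2 ^ t * x ^ 2 ^ t)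
                    + x ^ 2 ^ t * (c + x + c ^ 2 ^ t * x ^ 2 ^ t) ^ 2 ^ t) ^ 2 ^ t := by
            simp only [map_add, map_mul, map_pow, hσ0, hσ1, hσy]
          rw [hσz]
          simp only [map_add, map_mul, map_pow]
          rw [q8_F5 t _ _ (Ideal.Quotient.mk I c₂) h2 hC hX hCD hD]
          linear_combination q8_F6 t (Ideal.Quotient.mk I c) (Ideal.Quotient.mk I x)
            (Ideal.Quotient.mk I c₂) h2 hC hX hCD hD
        · -- X 2
          simp only [RingHom.comp_apply, AlgHom.toRingHom_eq_coe, RingHom.coe_coe]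
          show (Ideal.Quotient.mk I) (σ₀ (σ₀ (σ₀ c₂))) = (Ideal.Quotient.mk I) c₂
          rw [hσ2, hσ2, hσ2]
    have h' := RingHom.congr_fun hkey p
    simp only [RingHom.comp_apply, AlgHom.toRingHom_eq_coe, RingHom.coe_coe] at h'
    refine Ideal.Quotient.eq_zero_iff_mem.mp ?_
    rw [map_sub, h', sub_self]
end
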